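/- Fix n ≥ 2 and 2 ≤ k ≤ n, and let B_n^k be the connected building set on [n] consisting of all singletons and all subsets of cardinality at least k. Then the q-h-polynomial satisfies the palindromicity relation h_{B_n^k}(t,q) = t^{n−1} q^{(k² − 2kn − k + n² + 3n − 2)/2} · h_{B_n^k}(t^{−1}, q^{−1}), as an identity in the Laurent polynomial ring ℤ[t^{±1}, q^{±1}]. -/
import Mathlib


open scoped Classical

noncomputable section

/-- A rooted tree on the vertex set `S ⊆ ℕ`, encoded by its root and its parent
function; edges are directed away from the root (so each non-root vertex `i`
carries the edge `(i, parent i)`, with `parent i` closer to the root).  The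
parent function is normalized to be the identity outside `S` and at the root. -/
structure RTree (S : Finset ℕ) where
  root : ℕ
  root_mem : root ∈ S
  parent : ℕ → ℕ
  parent_out : ∀ i, i ∉ S → parent i = i
  parent_root : parent root = root
  parent_mem : ∀ i ∈ S, parent i ∈ S
  reach : ∀ i ∈ S, ∃ k, parent^[k] i = root

namespace RTree

variable {S : Finset ℕ}

/-- The set `T_{≤ i}` of descendants of `i` in `T` (including `i` itself). -/
def desc (T : RTree S) (i : ℕ) : Finset ℕ :=
  S.filter fun j => ∃ k, T.parent^[k] j = i

/-- The depth of a vertex: its distance to the root. -/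
def dp (T : RTree S) (x : ℕ) : ℕ :=
  sInf {k | T.parent^[k] x = T.root}

/-- The depth of the tree: the maximal depth of a vertex. -/
def depth (T : RTree S) : ℕ := S.sup T.dp

/-- The set of descent edges `(i, parent i)` with `i > parent i`, recorded by
the child endpoint `i`. -/
def desSet (T : RTree S) : Finset ℕ :=
  S.filter fun i => i ≠ T.root ∧ T.parent i < i

/-- The number of descents of `T`. -/
def des (T : RTree S) : ℕ := T.desSet.card

/-- The major index of `T`: the sum, over all descent edges `(i,j)` of `T`
(with `j = parent i`), of `depth T - dp j`, i.e. of the minimal rank of `j`. -/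
def maj (T : RTree S) : ℕ :=
  ∑ i ∈ T.desSet, (T.depth - T.dp (T.parent i))

/-- The statistic `μ(T)`: the sum, over all edges `(i,j)` of `T`
(with `j = parent i`), of `depth T - dp j`. -/
def mu (T : RTree S) : ℕ :=
  ∑ i ∈ S.filter (fun i => i ≠ T.root), (T.depth - T.dp (T.parent i))

end RTree


namespace RTree

variable {S : Finset ℕ}

-- ====== auxiliary API ======

theorem ext' (T₁ T₂ : RTree S) (h1 : T₁.root = T₂.root) (h2 : T₁.parent = T₂.parent) :
    T₁ = T₂ := by
  cases T₁; cases T₂; cases h1; cases h2; rfl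

variable (T : RTree S)

theorem iterate_root (a : ℕ) : T.parent^[a] T.root = T.root := by
  induction a with
  | zero => rfl
  | succ a ih => rw [Function.iterate_succ_apply, T.parent_root, ih]

theorem iterate_mem {i : ℕ} (hi : i ∈ S) (a : ℕ) : T.parent^[a] i ∈ S := by
  induction a with
  | zero => exact hi
  | succ a ih => rw [Function.iterate_succ_apply']; exact T.parent_mem _ ih

theorem mem_desc {i j : ℕ} : j ∈ T.desc i ↔ j ∈ S ∧ ∃ a, T.parent^[a] j = i := by
  simp [desc]

theorem self_mem_desc {i : ℕ} (hi : i ∈ S) : i ∈ T.desc i :=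
  T.mem_desc.2 ⟨hi, 0, rfl⟩

theorem desc_subset_S (i : ℕ) : T.desc i ⊆ S := Finset.filter_subset _ _

theorem dp_spec {i : ℕ} (hi : i ∈ S) : T.parent^[T.dp i] i = T.root := by
  have h : {k | T.parent^[k] i = T.root}.Nonempty := T.reach i hi
  exact Nat.sInf_mem h

theorem dp_root : T.dp T.root = 0 := by
  have : (0 : ℕ) ∈ {k | T.parent^[k] T.root = T.root} := rfl
  exact Nat.eq_zero_of_le_zero (Nat.sInf_le this)

theorem eq_root_of_dp_eq_zero {i : ℕ} (hi : i ∈ S) (h : T.dp i = 0) : i = T.root := by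
  have := T.dp_spec hi
  rwa [h] at this

theorem parent_ne {i : ℕ} (hi : i ∈ S) (hr : i ≠ T.root) : T.parent i ≠ i := by
  intro h
  obtain ⟨a, ha⟩ := T.reach i hi
  have : ∀ b, T.parent^[b] i = i := by
    intro b
    induction b with
    | zero => rfl
    | succ b ih => rw [Function.iterate_succ_apply, h, ih]
  exact hr (by rw [← ha, this])

theorem dp_parent {i : ℕ} (hi : i ∈ S) (hr : i ≠ T.root) :
    T.dp i = T.dp (T.parent i) + 1 := by
  have hpi : T.parent i ∈ S := T.parent_mem i hi
  have h1 : T.dp i ≤ T.dp (T.parent i) + 1 := by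
    apply Nat.sInf_le
    show T.parent^[T.dp (T.parent i) + 1] i = T.root
    rw [Function.iterate_succ_apply]
    exact T.dp_spec hpi
  have h0 : T.dp i ≠ 0 := fun h => hr (T.eq_root_of_dp_eq_zero hi h)
  have h2 : T.dp (T.parent i) ≤ T.dp i - 1 := by
    apply Nat.sInf_le
    show T.parent^[T.dp i - 1] (T.parent i) = T.root
    rw [← Function.iterate_succ_apply, Nat.succ_eq_add_one, Nat.sub_add_cancel (Nat.one_le_iff_ne_zero.2 h0)]
    exact T.dp_spec hi
  omega

theorem dp_lt_of_iterate {a : ℕ} : ∀ {j : ℕ}, j ∈ S → T.parent^[a] j ≠ j →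
    T.dp (T.parent^[a] j) < T.dp j := by
  induction a with
  | zero => intro j _ h; exact absurd rfl h
  | succ a ih =>
    intro j hj h
    have hjr : j ≠ T.root := by
      rintro rfl
      exact h (T.iterate_root _)
    have hpj : T.parent j ∈ S := T.parent_mem j hj
    rw [Function.iterate_succ_apply] at h ⊢
    have hd : T.dp j = T.dp (T.parent j) + 1 := T.dp_parent hj hjr
    by_cases hc : T.parent^[a] (T.parent j) = T.parent j
    · rw [hc]; omega
    · have := ih hpj hc
      omega

theorem dp_lt_of_mem_desc {i j : ℕ} (hj : j ∈ S) (hij : j ∈ T.desc i) (hne : j ≠ i) :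
    T.dp i < T.dp j := by
  obtain ⟨-, a, ha⟩ := T.mem_desc.1 hij
  rw [← ha]
  exact T.dp_lt_of_iterate hj (by rw [ha]; exact fun h => hne h.symm)

theorem desc_antisymm {i j : ℕ} (hi : i ∈ S) (hj : j ∈ S)
    (hij : j ∈ T.desc i) (hji : i ∈ T.desc j) : i = j := by
  by_contra hne
  have h1 := T.dp_lt_of_mem_desc hj hij (fun h => hne h.symm)
  have h2 := T.dp_lt_of_mem_desc hi hji hne
  omega

theorem desc_mono {i j : ℕ} (hij : j ∈ T.desc i) : T.desc j ⊆ T.desc i := by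
  obtain ⟨-, a, ha⟩ := T.mem_desc.1 hij
  intro x hx
  obtain ⟨hxS, b, hb⟩ := T.mem_desc.1 hx
  exact T.mem_desc.2 ⟨hxS, a + b, by rw [Function.iterate_add_apply, hb, ha]⟩

theorem desc_root_eq : T.desc T.root = S := by
  apply Finset.Subset.antisymm (T.desc_subset_S _)
  intro i hi
  exact T.mem_desc.2 ⟨hi, T.reach i hi⟩

theorem dp_le_depth {i : ℕ} (hi : i ∈ S) : T.dp i ≤ T.depth := Finset.le_sup hi

theorem dp_iterate {i : ℕ} (hi : i ∈ S) : ∀ {a : ℕ}, a ≤ T.dp i →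
    T.dp (T.parent^[a] i) = T.dp i - a := by
  intro a
  induction a generalizing i with
  | zero => simp
  | succ a ih =>
    intro ha
    have hir : i ≠ T.root := by
      rintro rfl
      rw [T.dp_root] at ha; omega
    have hd : T.dp i = T.dp (T.parent i) + 1 := T.dp_parent hi hir
    rw [Function.iterate_succ_apply]
    rw [ih (T.parent_mem i hi) (by omega)]
    omega

theorem eq_root_of_iterate_big {i : ℕ} (hi : i ∈ S) {a : ℕ} (ha : T.dp i ≤ a) :
    T.parent^[a] i = T.root := by
  have : T.parent^[a] i = T.parent^[a - T.dp i] (T.parent^[T.dp i] i) := by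
    rw [← Function.iterate_add_apply, Nat.sub_add_cancel ha]
  rw [this, T.dp_spec hi, T.iterate_root]

end RTree

-- ====== the relabeling involution ======

/-- The relabeling `i ↦ n+1-i` on `[1,n]`, identity elsewhere. -/
def rl (n : ℕ) (i : ℕ) : ℕ := if i ∈ Finset.Icc 1 n then n + 1 - i else i

theorem rl_mem {n i : ℕ} (hi : i ∈ Finset.Icc 1 n) : rl n i ∈ Finset.Icc 1 n := by
  simp only [rl, if_pos hi]
  simp only [Finset.mem_Icc] at hi ⊢
  omega

theorem rl_rl (n i : ℕ) : rl n (rl n i) = i := by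
  by_cases hi : i ∈ Finset.Icc 1 n
  · have h2 := rl_mem hi
    simp only [rl, if_pos hi] at h2 ⊢
    rw [if_pos h2]
    simp only [Finset.mem_Icc] at hi
    omega
  · simp only [rl, if_neg hi]

theorem rl_inj {n : ℕ} : Function.Injective (rl n) :=
  Function.LeftInverse.injective (g := rl n) (rl_rl n)

theorem rl_mem_iff {n i : ℕ} : rl n i ∈ Finset.Icc 1 n ↔ i ∈ Finset.Icc 1 n := by
  constructor
  · intro h
    by_contra hi
    rw [rl, if_neg hi] at h
    exact hi h
  · exact rl_mem

theorem rl_lt_rl {n a b : ℕ} (ha : a ∈ Finset.Icc 1 n) (hb : b ∈ Finset.Icc 1 n) :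
    rl n a < rl n b ↔ b < a := by
  simp only [rl, if_pos ha, if_pos hb]
  simp only [Finset.mem_Icc] at ha hb
  omega

theorem rl_image {n : ℕ} : (Finset.Icc 1 n).image (rl n) = Finset.Icc 1 n := by
  apply Finset.Subset.antisymm
  · intro x hx
    obtain ⟨y, hy, rfl⟩ := Finset.mem_image.1 hx
    exact rl_mem hy
  · intro x hx
    exact Finset.mem_image.2 ⟨rl n x, rl_mem hx, rl_rl n x⟩

namespace RTree

variable {n : ℕ}

/-- The relabeled tree. -/
def sigma (T : RTree (Finset.Icc 1 n)) : RTree (Finset.Icc 1 n) where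
  root := rl n T.root
  root_mem := rl_mem T.root_mem
  parent i := rl n (T.parent (rl n i))
  parent_out i hi := by
    have h : rl n i = i := by rw [rl, if_neg hi]
    show rl n (T.parent (rl n i)) = i
    rw [h, T.parent_out i hi, h]
  parent_root := by
    show rl n (T.parent (rl n (rl n T.root))) = rl n T.root
    rw [rl_rl, T.parent_root]
  parent_mem i hi := rl_mem (T.parent_mem _ (rl_mem hi))
  reach i hi := by
    obtain ⟨a, ha⟩ := T.reach (rl n i) (rl_mem hi)
    refine ⟨a, ?_⟩
    have key : ∀ b j, (fun i => rl n (T.parent (rl n i)))^[b] j = rl n (T.parent^[b] (rl n j)) := by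
      intro b
      induction b with
      | zero => intro j; simp [rl_rl]
      | succ b ih =>
        intro j
        rw [Function.iterate_succ_apply, ih, rl_rl, ← Function.iterate_succ_apply]
    rw [key, ha]

theorem sigma_root (T : RTree (Finset.Icc 1 n)) : T.sigma.root = rl n T.root := rfl

theorem sigma_parent (T : RTree (Finset.Icc 1 n)) (i : ℕ) :
    T.sigma.parent i = rl n (T.parent (rl n i)) := rfl

theorem sigma_iterate (T : RTree (Finset.Icc 1 n)) (b i : ℕ) :
    (T.sigma).parent^[b] i = rl n (T.parent^[b] (rl n i)) := by
  induction b generalizing i with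
  | zero => simp [rl_rl]
  | succ b ih =>
    rw [Function.iterate_succ_apply, ih]
    show rl n (T.parent^[b] (rl n (rl n (T.parent (rl n i))))) = _
    rw [rl_rl, ← Function.iterate_succ_apply]

theorem sigma_sigma (T : RTree (Finset.Icc 1 n)) : T.sigma.sigma = T := by
  apply ext'
  · exact rl_rl n T.root
  · funext i
    show rl n (rl n (T.parent (rl n (rl n i)))) = T.parent i
    rw [rl_rl, rl_rl]

theorem dp_sigma (T : RTree (Finset.Icc 1 n)) (i : ℕ) : T.sigma.dp i = T.dp (rl n i) := by
  unfold dp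
  congr 1
  ext a
  simp only [Set.mem_setOf_eq, sigma_iterate]
  rw [sigma_root]
  constructor
  · intro h
    have := congrArg (rl n) h
    rwa [rl_rl, rl_rl] at this
  · intro h; rw [h]

theorem depth_sigma (T : RTree (Finset.Icc 1 n)) : T.sigma.depth = T.depth := by
  apply le_antisymm
  · apply Finset.sup_le
    intro i hi
    rw [dp_sigma]
    exact T.dp_le_depth (rl_mem hi)
  · apply Finset.sup_le
    intro i hi
    have h : T.sigma.dp (rl n i) = T.dp i := by rw [dp_sigma, rl_rl]
    rw [← h]
    exact Finset.le_sup (rl_mem hi)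

theorem desc_sigma (T : RTree (Finset.Icc 1 n)) (i : ℕ) :
    T.sigma.desc i = (T.desc (rl n i)).image (rl n) := by
  ext j
  simp only [mem_desc, Finset.mem_image, sigma_iterate]
  constructor
  · rintro ⟨hj, a, ha⟩
    refine ⟨rl n j, ⟨rl_mem hj, a, ?_⟩, rl_rl n j⟩
    have := congrArg (rl n) ha; rwa [rl_rl] at this
  · rintro ⟨x, ⟨hx, a, ha⟩, rfl⟩
    exact ⟨rl_mem hx, a, by rw [rl_rl, ha, rl_rl]⟩

/-- The ascent set. -/
def ascSet (T : RTree (Finset.Icc 1 n)) : Finset ℕ :=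
  (Finset.Icc 1 n).filter fun i => i ≠ T.root ∧ i < T.parent i

theorem desSet_sigma (T : RTree (Finset.Icc 1 n)) :
    T.sigma.desSet = T.ascSet.image (rl n) := by
  ext i
  simp only [desSet, ascSet, Finset.mem_image, Finset.mem_filter]
  constructor
  · rintro ⟨hi, hroot, hlt⟩
    rw [sigma_root] at hroot
    refine ⟨rl n i, ⟨rl_mem hi, ?_, ?_⟩, rl_rl n i⟩
    · intro h
      exact hroot (by rw [← h, rl_rl])
    · rw [sigma_parent] at hlt
      have hpm : T.parent (rl n i) ∈ Finset.Icc 1 n := T.parent_mem _ (rl_mem hi)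
      have h2 : rl n (T.parent (rl n i)) < rl n (rl n i) := by rwa [rl_rl]
      exact (rl_lt_rl hpm (rl_mem hi)).1 h2
  · rintro ⟨x, ⟨hx, hroot, hlt⟩, rfl⟩
    refine ⟨rl_mem hx, ?_, ?_⟩
    · rw [sigma_root]
      intro h; exact hroot (rl_inj h)
    · rw [sigma_parent, rl_rl]
      exact (rl_lt_rl (T.parent_mem _ hx) hx).2 hlt

theorem filter_ne_root_eq (T : RTree (Finset.Icc 1 n)) :
    (Finset.Icc 1 n).filter (fun i => i ≠ T.root) = T.desSet ∪ T.ascSet := by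
  ext i
  simp only [Finset.mem_filter, Finset.mem_union, desSet, ascSet]
  constructor
  · rintro ⟨hi, hr⟩
    have := T.parent_ne hi hr
    rcases lt_or_gt_of_ne this with h | h
    · exact Or.inl ⟨hi, hr, h⟩
    · exact Or.inr ⟨hi, hr, h⟩
  · rintro (⟨hi, hr, -⟩ | ⟨hi, hr, -⟩) <;> exact ⟨hi, hr⟩

theorem disj_des_asc (T : RTree (Finset.Icc 1 n)) : Disjoint T.desSet T.ascSet := by
  rw [Finset.disjoint_left]
  intro i hi hi'
  simp only [desSet, ascSet, Finset.mem_filter] at hi hi'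
  omega

theorem des_add_asc (T : RTree (Finset.Icc 1 n)) (hn : 1 ≤ n) :
    T.des + T.ascSet.card = n - 1 := by
  have h1 : ((Finset.Icc 1 n).filter (fun i => i ≠ T.root)).card = n - 1 := by
    rw [Finset.filter_ne', Finset.card_erase_of_mem T.root_mem, Nat.card_Icc]
    omega
  rw [← h1, T.filter_ne_root_eq, Finset.card_union_of_disjoint T.disj_des_asc]
  rfl

theorem des_sigma (T : RTree (Finset.Icc 1 n)) (hn : 1 ≤ n) :
    T.sigma.des = (n - 1) - T.des := by
  have : T.sigma.des = T.ascSet.card := by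
    rw [des, desSet_sigma, Finset.card_image_of_injective _ rl_inj]
  have h := T.des_add_asc hn
  omega

theorem maj_sigma (T : RTree (Finset.Icc 1 n)) :
    T.sigma.maj = ∑ i ∈ T.ascSet, (T.depth - T.dp (T.parent i)) := by
  rw [maj, desSet_sigma, Finset.sum_image (fun a _ b _ h => rl_inj h)]
  apply Finset.sum_congr rfl
  intro i hi
  simp only [ascSet, Finset.mem_filter] at hi
  have hp : T.sigma.parent (rl n i) = rl n (T.parent i) := by
    rw [sigma_parent, rl_rl]
  rw [depth_sigma, hp, dp_sigma, rl_rl]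

theorem maj_add_maj_sigma (T : RTree (Finset.Icc 1 n)) :
    T.maj + T.sigma.maj = T.mu := by
  rw [maj_sigma, mu, T.filter_ne_root_eq,
    Finset.sum_union T.disj_des_asc]
  rfl

theorem maj_le_mu (T : RTree (Finset.Icc 1 n)) : T.maj ≤ T.mu := by
  have := T.maj_add_maj_sigma; omega

theorem des_le (T : RTree (Finset.Icc 1 n)) (hn : 1 ≤ n) : T.des ≤ n - 1 := by
  have := T.des_add_asc hn; omega

end RTree

/-- `B` is a building set on the finite ground set `S`. -/
def IsBuildingSet (S : Finset ℕ) (B : Finset (Finset ℕ)) : Prop :=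
  (∀ I ∈ B, I ⊆ S ∧ I.Nonempty) ∧
  (∀ I ∈ B, ∀ J ∈ B, (I ∩ J).Nonempty → I ∪ J ∈ B) ∧
  (∀ i ∈ S, ({i} : Finset ℕ) ∈ B)

/-- `B` is a connected building set on `S`. -/
def IsConnBuildingSet (S : Finset ℕ) (B : Finset (Finset ℕ)) : Prop :=
  IsBuildingSet S B ∧ S ∈ B

/-- `T` is a `B`-tree: all descendant sets belong to `B`, and no union of
descendant sets of `k ≥ 2` pairwise incomparable nodes belongs to `B`. -/
def IsBTree (S : Finset ℕ) (B : Finset (Finset ℕ)) (T : RTree S) : Prop :=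
  (∀ i ∈ S, T.desc i ∈ B) ∧
  ∀ I : Finset ℕ, I ⊆ S → 2 ≤ I.card →
    (∀ i ∈ I, ∀ j ∈ I, i ≠ j → i ∉ T.desc j ∧ j ∉ T.desc i) →
    I.biUnion T.desc ∉ B

theorem mu_of_isBTree (n k : ℕ) (hn : 2 ≤ n) (hk2 : 2 ≤ k) (hkn : k ≤ n)
    (S : Finset ℕ) (cardS : S.card = n)
    (B : Finset (Finset ℕ))
    (hB : B = S.image (fun i => ({i} : Finset ℕ)) ∪
        (S.powerset.filter fun I => k ≤ I.card))
    (T : RTree S) (hT : IsBTree S B T) :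
    2 * (T.mu : ℤ) = (k : ℤ) ^ 2 - 2 * k * n - k + (n : ℤ) ^ 2 + 3 * n - 2 := by
  have memB : ∀ I : Finset ℕ, I ∈ B ↔ ((∃ i ∈ S, I = {i}) ∨ (I ⊆ S ∧ k ≤ I.card)) := by
    intro I
    rw [hB]
    simp only [Finset.mem_union, Finset.mem_image, Finset.mem_filter, Finset.mem_powerset]
    constructor
    · rintro (⟨i, hi, rfl⟩ | ⟨h1, h2⟩)
      · exact Or.inl ⟨i, hi, rfl⟩
      · exact Or.inr ⟨h1, h2⟩
    · rintro (⟨i, hi, rfl⟩ | ⟨h1, h2⟩)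
      · exact Or.inl ⟨i, hi, rfl⟩
      · exact Or.inr ⟨h1, h2⟩
  have hdesc := hT.1
  -- non-leaves have at least k descendants
  have desc_card : ∀ i ∈ S, T.desc i ≠ {i} → k ≤ (T.desc i).card := by
    intro i hi hL
    rcases (memB _).1 (hdesc i hi) with ⟨j, _, hIj⟩ | ⟨-, hk⟩
    · exfalso
      apply hL
      have hii := T.self_mem_desc hi
      rw [hIj] at hii ⊢
      rw [Finset.mem_singleton.1 hii]
    · exact hk
  -- incomparable pairs
  have pair : ∀ u ∈ S, ∀ v ∈ S, u ≠ v → u ∉ T.desc v → v ∉ T.desc u →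
      (T.desc u ∪ T.desc v) ∉ B := by
    intro u hu v hv hne h1 h2
    have hbi : ({u, v} : Finset ℕ).biUnion T.desc = T.desc u ∪ T.desc v := by
      rw [Finset.biUnion_insert, Finset.singleton_biUnion]
    have := hT.2 {u, v} (by
        intro x hx
        rcases Finset.mem_insert.1 hx with rfl | hx
        · exact hu
        · rw [Finset.mem_singleton.1 hx]; exact hv)
      (by rw [Finset.card_pair hne])
      (by
        intro i hi j hj hij
        rcases Finset.mem_insert.1 hi with rfl | hi'
        · rcases Finset.mem_insert.1 hj with rfl | hj'
          · exact absurd rfl hij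
          · rw [Finset.mem_singleton.1 hj']; exact ⟨h1, h2⟩
        · rw [Finset.mem_singleton.1 hi']
          rcases Finset.mem_insert.1 hj with rfl | hj'
          · exact ⟨h2, h1⟩
          · exact absurd (by rw [Finset.mem_singleton.1 hi', Finset.mem_singleton.1 hj']) hij)
    rwa [hbi] at this
  -- non-leaves are comparable to everything
  have comp : ∀ v ∈ S, T.desc v ≠ {v} → ∀ u ∈ S, u ∈ T.desc v ∨ v ∈ T.desc u := by
    intro v hv hnl u hu
    by_contra hc
    push_neg at hc
    obtain ⟨h1, h2⟩ := hc
    have hne : u ≠ v := by rintro rfl; exact h1 (T.self_mem_desc hu)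
    apply pair u hu v hv hne h1 h2
    apply (memB _).2
    right
    refine ⟨Finset.union_subset (T.desc_subset_S u) (T.desc_subset_S v), ?_⟩
    calc k ≤ (T.desc v).card := desc_card v hv hnl
      _ ≤ (T.desc u ∪ T.desc v).card := Finset.card_le_card Finset.subset_union_right
  have root_nl : T.desc T.root ≠ {T.root} := by
    rw [T.desc_root_eq]
    intro h
    have := congrArg Finset.card h
    rw [cardS, Finset.card_singleton] at this
    omega
  -- deepest non-leaf
  obtain ⟨v, hvNL, hvmax⟩ := Finset.exists_max_image
    (S.filter (fun i => ¬(T.desc i = {i}))) T.dp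
    ⟨T.root, Finset.mem_filter.2 ⟨T.root_mem, root_nl⟩⟩
  obtain ⟨hvS, hvnl⟩ := Finset.mem_filter.1 hvNL
  set m := T.dp v with hm
  -- characterization of non-leaves
  have NL_iff : ∀ u ∈ S, (¬(T.desc u = {u}) ↔ v ∈ T.desc u) := by
    intro u hu
    constructor
    · intro hnl
      rcases comp u hu hnl v hvS with h | h
      · exact h
      · by_cases he : u = v
        · subst he; exact T.self_mem_desc hu
        · exfalso
          have h1 := T.dp_lt_of_mem_desc hu h he
          have h2 := hvmax u (Finset.mem_filter.2 ⟨hu, hnl⟩)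
          omega
    · intro hvd heq
      rw [heq, Finset.mem_singleton] at hvd
      exact hvnl (by rw [hvd]; exact heq)
  -- leaves
  set LVS := S.filter (fun i => T.desc i = {i}) with hLVS
  have hdescv_card : k ≤ (T.desc v).card := desc_card v hvS hvnl
  have ch_sub : (T.desc v).erase v ⊆ LVS := by
    intro x hx
    obtain ⟨hne, hxd⟩ := Finset.mem_erase.1 hx
    have hxS : x ∈ S := T.desc_subset_S v hxd
    refine Finset.mem_filter.2 ⟨hxS, ?_⟩
    by_contra hnl
    have h1 := T.dp_lt_of_mem_desc hxS hxd hne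
    have h2 := hvmax x (Finset.mem_filter.2 ⟨hxS, hnl⟩)
    omega
  have ch_card : k - 1 ≤ ((T.desc v).erase v).card := by
    rw [Finset.card_erase_of_mem (T.self_mem_desc hvS)]
    omega
  have LVS_card_le : LVS.card ≤ k - 1 := by
    by_contra hcon
    push_neg at hcon
    have h2 : 2 ≤ LVS.card := by
      have := Finset.card_le_card ch_sub
      omega
    have hbi : LVS.biUnion T.desc = LVS := by
      ext x
      rw [Finset.mem_biUnion]
      constructor
      · rintro ⟨a, ha, hxa⟩
        have := (Finset.mem_filter.1 ha).2
        rw [this, Finset.mem_singleton] at hxa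
        rwa [hxa]
      · intro hx
        exact ⟨x, hx, by rw [(Finset.mem_filter.1 hx).2]; exact Finset.mem_singleton_self x⟩
    apply hT.2 LVS (Finset.filter_subset _ _) h2
      (by
        intro i hi j hj hij
        have hdi := (Finset.mem_filter.1 hi).2
        have hdj := (Finset.mem_filter.1 hj).2
        constructor
        · rw [hdj, Finset.mem_singleton]; exact hij
        · rw [hdi, Finset.mem_singleton]; exact hij.symm)
    rw [hbi]
    apply (memB _).2
    right
    exact ⟨Finset.filter_subset _ _, by omega⟩
  have ch_eq : (T.desc v).erase v = LVS := by
    apply Finset.eq_of_subset_of_card_le ch_sub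
    omega
  have LVS_card : LVS.card = k - 1 := by
    have := Finset.card_le_card ch_sub
    omega
  -- every leaf is a child of v at depth m+1
  have leaf_parent : ∀ x ∈ LVS, T.parent x = v ∧ T.dp x = m + 1 := by
    intro x hx
    rw [← ch_eq] at hx
    obtain ⟨hne, hxd⟩ := Finset.mem_erase.1 hx
    have hxS : x ∈ S := T.desc_subset_S v hxd
    have hxr : x ≠ T.root := by
      rintro rfl
      have hvdr : v ∈ T.desc T.root := by rw [T.desc_root_eq]; exact hvS
      exact hne (T.desc_antisymm hxS hvS hvdr hxd)
    have hpxS := T.parent_mem x hxS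
    have hx_in_px : x ∈ T.desc (T.parent x) := T.mem_desc.2 ⟨hxS, 1, by simp⟩
    have hpx_ne : T.parent x ≠ x := T.parent_ne hxS hxr
    have hpx_nl : ¬(T.desc (T.parent x) = {T.parent x}) := by
      intro h
      rw [h, Finset.mem_singleton] at hx_in_px
      exact hpx_ne hx_in_px.symm
    have h1 : v ∈ T.desc (T.parent x) := (NL_iff _ hpxS).1 hpx_nl
    obtain ⟨-, a, ha⟩ := T.mem_desc.1 hxd
    have ha1 : a ≠ 0 := by rintro rfl; exact hne ha
    have h2 : T.parent x ∈ T.desc v := by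
      refine T.mem_desc.2 ⟨hpxS, a - 1, ?_⟩
      have hsucc : a - 1 + 1 = a := by omega
      rw [← hsucc, Function.iterate_succ_apply] at ha
      exact ha
    have hpv : T.parent x = v := T.desc_antisymm hpxS hvS h1 h2
    refine ⟨hpv, ?_⟩
    rw [T.dp_parent hxS hxr, hpv]
  -- the set of non-leaves is the ancestor chain of v
  have NL_eq_image : S.filter (fun i => ¬(T.desc i = {i})) =
      (Finset.range (m + 1)).image (fun a => T.parent^[a] v) := by
    ext u
    simp only [Finset.mem_filter, Finset.mem_image, Finset.mem_range]
    constructor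
    · rintro ⟨hu, hnl⟩
      have hvd := (NL_iff u hu).1 hnl
      obtain ⟨-, a, ha⟩ := T.mem_desc.1 hvd
      refine ⟨min a m, by omega, ?_⟩
      by_cases h : a ≤ m
      · rw [min_eq_left h]; exact ha
      · rw [min_eq_right (by omega : m ≤ a)]
        have hmr : T.parent^[m] v = T.root := T.eq_root_of_iterate_big hvS le_rfl
        have hAr : T.parent^[a] v = T.root := T.eq_root_of_iterate_big hvS (by omega)
        rw [hmr, ← ha, hAr]
    · rintro ⟨a, ham, rfl⟩
      have huS : T.parent^[a] v ∈ S := T.iterate_mem hvS a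
      exact ⟨huS, (NL_iff _ huS).2 (T.mem_desc.2 ⟨hvS, a, rfl⟩)⟩
  have NL_dp : ∀ a, a < m + 1 → T.dp (T.parent^[a] v) = m - a := by
    intro a ha
    exact T.dp_iterate hvS (by omega)
  have NL_inj : ∀ a ∈ Finset.range (m + 1), ∀ b ∈ Finset.range (m + 1),
      T.parent^[a] v = T.parent^[b] v → a = b := by
    intro a ha b hb h
    rw [Finset.mem_range] at ha hb
    have := congrArg T.dp h
    rw [NL_dp a ha, NL_dp b hb] at this
    omega
  have sum_NL : ∑ u ∈ S.filter (fun i => ¬(T.desc i = {i})), T.dp u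
      = ∑ b ∈ Finset.range (m + 1), b := by
    rw [NL_eq_image, Finset.sum_image NL_inj]
    rw [← Finset.sum_range_reflect (fun j => j) (m + 1)]
    apply Finset.sum_congr rfl
    intro a ha
    rw [Finset.mem_range] at ha
    rw [NL_dp a ha]
    omega
  have NL_card : (S.filter (fun i => ¬(T.desc i = {i}))).card = m + 1 := by
    rw [NL_eq_image, Finset.card_image_of_injOn NL_inj, Finset.card_range]
  have hpart : LVS ∪ S.filter (fun i => ¬(T.desc i = {i})) = S :=
    Finset.filter_union_filter_not_eq _ S
  have hdisj : Disjoint LVS (S.filter (fun i => ¬(T.desc i = {i}))) :=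
    Finset.disjoint_filter_filter_not S S _
  have hcard_eq : n = (k - 1) + (m + 1) := by
    rw [← cardS, ← hpart, Finset.card_union_of_disjoint hdisj, LVS_card, NL_card]
  have hmnk : m = n - k := by omega
  -- depth
  have depth_eq : T.depth = m + 1 := by
    apply le_antisymm
    · apply Finset.sup_le
      intro i hi
      by_cases h : T.desc i = {i}
      · exact le_of_eq (leaf_parent i (Finset.mem_filter.2 ⟨hi, h⟩)).2
      · have hmem : i ∈ (Finset.range (m + 1)).image (fun a => T.parent^[a] v) := by
          rw [← NL_eq_image]; exact Finset.mem_filter.2 ⟨hi, h⟩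
        obtain ⟨a, ha, rfl⟩ := Finset.mem_image.1 hmem
        rw [Finset.mem_range] at ha
        rw [NL_dp a ha]
        omega
    · have hLne : LVS.Nonempty := Finset.card_pos.1 (by omega)
      obtain ⟨x, hx⟩ := hLne
      have h := (leaf_parent x hx).2
      rw [← h]
      exact Finset.le_sup (Finset.mem_filter.1 hx).1
  -- sum of depths over S
  have sum_LVS : ∑ i ∈ LVS, T.dp i = (k - 1) * (m + 1) := by
    rw [Finset.sum_congr rfl (fun x hx => (leaf_parent x hx).2), Finset.sum_const, LVS_card,
      smul_eq_mul]
  have sum_dp : ∑ i ∈ S, T.dp i = (∑ b ∈ Finset.range (m + 1), b) + (k - 1) * (m + 1) := by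
    have hsum := Finset.sum_union (f := T.dp) hdisj
    rw [hpart] at hsum
    rw [hsum, sum_NL, sum_LVS, Nat.add_comm]
  -- compute mu
  have dp_le : ∀ i ∈ S, T.dp i ≤ m + 1 := fun i hi => depth_eq ▸ T.dp_le_depth hi
  have mu_int : (T.mu : ℤ) = ∑ i ∈ S.filter (fun i => i ≠ T.root), ((m : ℤ) + 2 - T.dp i) := by
    rw [RTree.mu, Nat.cast_sum]
    apply Finset.sum_congr rfl
    intro i hi
    obtain ⟨hiS, hir⟩ := Finset.mem_filter.1 hi
    have hd := T.dp_parent hiS hir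
    have hle := dp_le i hiS
    have hlep : T.dp (T.parent i) ≤ T.depth := T.dp_le_depth (T.parent_mem i hiS)
    rw [depth_eq] at hlep ⊢
    omega
  have filter_card : (S.filter (fun i => i ≠ T.root)).card = n - 1 := by
    rw [Finset.filter_ne', Finset.card_erase_of_mem T.root_mem, cardS]
  have sum_filter_dp : ∑ i ∈ S.filter (fun i => i ≠ T.root), T.dp i = ∑ i ∈ S, T.dp i := by
    rw [Finset.filter_ne']
    exact Finset.sum_erase _ T.dp_root
  have cast_sum_dp : ∑ i ∈ S.filter (fun i => i ≠ T.root), ((T.dp i : ℤ))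
      = ((∑ b ∈ Finset.range (m + 1), b : ℕ) : ℤ) + ((k - 1 : ℕ) : ℤ) * ((m : ℤ) + 1) := by
    have h1 : ∑ i ∈ S.filter (fun i => i ≠ T.root), ((T.dp i : ℤ))
        = ((∑ i ∈ S.filter (fun i => i ≠ T.root), T.dp i : ℕ) : ℤ) := by
      rw [Nat.cast_sum]
    rw [h1, sum_filter_dp, sum_dp]
    push_cast
    ring
  have mu_val : (T.mu : ℤ) = ((n : ℤ) - 1) * ((m : ℤ) + 2)
      - (((∑ b ∈ Finset.range (m + 1), b : ℕ) : ℤ) + ((k - 1 : ℕ) : ℤ) * ((m : ℤ) + 1)) := by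
    rw [mu_int, Finset.sum_sub_distrib, Finset.sum_const, filter_card, cast_sum_dp,
      nsmul_eq_mul]
    have hn1 : ((n - 1 : ℕ) : ℤ) = (n : ℤ) - 1 := by omega
    rw [hn1]
  have range_sum : 2 * (∑ b ∈ Finset.range (m + 1), b) = (m + 1) * m := by
    rw [Nat.mul_comm]
    exact Finset.sum_range_id_mul_two (m + 1)
  have h2r : 2 * ((∑ b ∈ Finset.range (m + 1), b : ℕ) : ℤ) = ((m : ℤ) + 1) * m := by
    exact_mod_cast congrArg (Nat.cast : ℕ → ℤ) range_sum
  have hmZ : (m : ℤ) = (n : ℤ) - k := by omega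
  have hk1Z : ((k - 1 : ℕ) : ℤ) = (k : ℤ) - 1 := by omega
  rw [mu_val, hk1Z]
  linear_combination (-1 : ℤ) * h2r + ((n : ℤ) - k - m - 1) * hmZ

theorem mem_image_rl (n : ℕ) (A : Finset ℕ) (x : ℕ) :
    x ∈ A.image (rl n) ↔ rl n x ∈ A := by
  constructor
  · rintro h
    obtain ⟨y, hy, rfl⟩ := Finset.mem_image.1 h
    rwa [rl_rl]
  · intro h
    exact Finset.mem_image.2 ⟨rl n x, h, rl_rl n x⟩

theorem isBTree_sigma (n k : ℕ) (B : Finset (Finset ℕ))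
    (hB : B = (Finset.Icc 1 n).image (fun i => ({i} : Finset ℕ)) ∪
        ((Finset.Icc 1 n).powerset.filter fun I => k ≤ I.card))
    (T : RTree (Finset.Icc 1 n)) (hT : IsBTree (Finset.Icc 1 n) B T) :
    IsBTree (Finset.Icc 1 n) B T.sigma := by
  have hBinv : ∀ I ∈ B, I.image (rl n) ∈ B := by
    intro I hI
    rw [hB] at hI ⊢
    simp only [Finset.mem_union, Finset.mem_image, Finset.mem_filter,
      Finset.mem_powerset] at hI ⊢
    rcases hI with ⟨i, hi, rfl⟩ | ⟨h1, h2⟩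
    · exact Or.inl ⟨rl n i, rl_mem hi, by rw [Finset.image_singleton]⟩
    · refine Or.inr ⟨?_, ?_⟩
      · intro x hx
        rw [mem_image_rl] at hx
        exact rl_mem_iff.1 (h1 hx)
      · rw [Finset.card_image_of_injective _ rl_inj]; exact h2
  constructor
  · intro i hi
    rw [T.desc_sigma]
    exact hBinv _ (hT.1 (rl n i) (rl_mem hi))
  · intro I hIsub hIcard hinc
    have hJsub : I.image (rl n) ⊆ Finset.Icc 1 n :=
      Finset.image_subset_iff.2 fun y hy => rl_mem (hIsub hy)
    have hJcard : 2 ≤ (I.image (rl n)).card := by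
      rw [Finset.card_image_of_injective _ rl_inj]; exact hIcard
    have hJinc : ∀ a ∈ I.image (rl n), ∀ b ∈ I.image (rl n), a ≠ b →
        a ∉ T.desc b ∧ b ∉ T.desc a := by
      intro a ha b hb hab
      obtain ⟨i, hi, rfl⟩ := Finset.mem_image.1 ha
      obtain ⟨j, hj, rfl⟩ := Finset.mem_image.1 hb
      have hij : i ≠ j := fun h => hab (by rw [h])
      have h := hinc i hi j hj hij
      constructor
      · intro hc
        apply h.1
        rw [T.desc_sigma, mem_image_rl]
        exact hc
      · intro hc
        apply h.2
        rw [T.desc_sigma, mem_image_rl]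
        exact hc
    have hbi : (I.image (rl n)).biUnion T.desc = (I.biUnion T.sigma.desc).image (rl n) := by
      ext x
      rw [mem_image_rl]
      simp only [Finset.mem_biUnion]
      constructor
      · rintro ⟨a, ha, hx⟩
        obtain ⟨i, hi, rfl⟩ := Finset.mem_image.1 ha
        refine ⟨i, hi, ?_⟩
        rw [T.desc_sigma, mem_image_rl, rl_rl]
        exact hx
      · rintro ⟨i, hi, hx⟩
        rw [T.desc_sigma, mem_image_rl, rl_rl] at hx
        exact ⟨rl n i, Finset.mem_image.2 ⟨i, hi, rfl⟩, hx⟩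
    intro hcB
    apply hT.2 (I.image (rl n)) hJsub hJcard hJinc
    rw [hbi]
    exact hBinv _ hcB

instance (S : Finset ℕ) : Finite (RTree S) := by
  let f : RTree S → {x // x ∈ S} × ({x // x ∈ S} → {x // x ∈ S}) := fun T =>
    (⟨T.root, T.root_mem⟩, fun i => ⟨T.parent i, T.parent_mem i i.2⟩)
  have hf : Function.Injective f := by
    intro T1 T2 h
    rw [Prod.ext_iff] at h
    obtain ⟨h1, h2⟩ := h
    apply RTree.ext'
    · exact congrArg Subtype.val h1
    · funext i
      by_cases hi : i ∈ S
      · exact congrArg Subtype.val (congrFun h2 ⟨i, hi⟩)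
      · rw [T1.parent_out i hi, T2.parent_out i hi]
  exact Finite.of_injective f hf

/-- For `2 ≤ k ≤ n`, the `q`-`h`-polynomial of the nestohedron
of `B_n^k` satisfies
`h(t,q) = t^{n−1} q^{(k²−2kn−k+n²+3n−2)/2} h(t⁻¹,q⁻¹)` in `ℤ[t^{±1},q^{±1}]`
(stated for all commutative rings and all units `t, q`, with the exponent `e`
of `q` characterized by `2e = k² − 2kn − k + n² + 3n − 2`). -/
theorem Bnk_qh_palindromic
    (n k : ℕ) (hn : 2 ≤ n) (hk2 : 2 ≤ k) (hkn : k ≤ n)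
    (B : Finset (Finset ℕ))
    (hB : B = (Finset.Icc 1 n).image (fun i => ({i} : Finset ℕ)) ∪
        ((Finset.Icc 1 n).powerset.filter fun I => k ≤ I.card))
    (e : ℤ) (he : 2 * e = (k : ℤ) ^ 2 - 2 * k * n - k + (n : ℤ) ^ 2 + 3 * n - 2)
    (R : Type) [CommRing R] (t q : Rˣ) :
    (∑ᶠ T ∈ {T : RTree (Finset.Icc 1 n) | IsBTree (Finset.Icc 1 n) B T},
        (t : R) ^ T.des * (q : R) ^ T.maj)
      = (t : R) ^ (n - 1) * ((q ^ e : Rˣ) : R) *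
        ∑ᶠ T ∈ {T : RTree (Finset.Icc 1 n) | IsBTree (Finset.Icc 1 n) B T},
          ((t⁻¹ : Rˣ) : R) ^ T.des * ((q⁻¹ : Rˣ) : R) ^ T.maj := by
  have hfin : {T : RTree (Finset.Icc 1 n) | IsBTree (Finset.Icc 1 n) B T}.Finite :=
    Set.toFinite _
  rw [← hfin.coe_toFinset, finsum_mem_coe_finset, finsum_mem_coe_finset]
  set F := hfin.toFinset with hF
  have hmemF : ∀ T, T ∈ F ↔ IsBTree (Finset.Icc 1 n) B T := fun T => hfin.mem_toFinset
  have hn1 : 1 ≤ n := by omega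
  have hmu : ∀ T ∈ F, (T.mu : ℤ) = e := by
    intro T hTF
    have h := mu_of_isBTree n k hn hk2 hkn (Finset.Icc 1 n)
      (by rw [Nat.card_Icc]; omega) B hB T ((hmemF T).1 hTF)
    omega
  have hsig : ∀ T ∈ F, T.sigma ∈ F := fun T hT =>
    (hmemF _).2 (isBTree_sigma n k B hB T ((hmemF T).1 hT))
  have step1 : ∀ T ∈ F, (t : R) ^ T.des * (q : R) ^ T.maj
      = ((t : R) ^ (n - 1) * ((q ^ e : Rˣ) : R)) *
        (((t⁻¹ : Rˣ) : R) ^ T.sigma.des * ((q⁻¹ : Rˣ) : R) ^ T.sigma.maj) := by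
    intro T hTF
    have hdes : T.sigma.des = (n - 1) - T.des := T.des_sigma hn1
    have hmaj : T.maj + T.sigma.maj = T.mu := T.maj_add_maj_sigma
    have hdle : T.des ≤ n - 1 := T.des_le hn1
    have hmle : T.maj ≤ T.mu := T.maj_le_mu
    have hmuT := hmu T hTF
    have auxt : t ^ (n - 1) * (t⁻¹) ^ T.sigma.des = t ^ T.des := by
      rw [hdes, inv_pow, ← zpow_natCast t (n - 1), ← zpow_natCast t (n - 1 - T.des),
        ← zpow_neg, ← zpow_add, ← zpow_natCast t T.des]
      congr 1
      omega
    have auxq : q ^ e * (q⁻¹) ^ T.sigma.maj = q ^ T.maj := by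
      have hsm : T.sigma.maj = T.mu - T.maj := by omega
      rw [hsm, inv_pow, ← zpow_natCast q (T.mu - T.maj), ← zpow_neg, ← zpow_add,
        ← zpow_natCast q T.maj]
      congr 1
      omega
    have hu : (t ^ T.des * q ^ T.maj : Rˣ)
        = t ^ (n - 1) * q ^ e * ((t⁻¹) ^ T.sigma.des * (q⁻¹) ^ T.sigma.maj) := by
      rw [mul_mul_mul_comm, auxt, auxq]
    have := congrArg (Units.val : Rˣ → R) hu
    simpa only [Units.val_mul, Units.val_pow_eq_pow_val] using this
  rw [Finset.sum_congr rfl step1, ← Finset.mul_sum]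
  congr 1
  exact Finset.sum_nbij' RTree.sigma RTree.sigma hsig hsig
    (fun a _ => a.sigma_sigma) (fun a _ => a.sigma_sigma) (fun a _ => rfl)
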